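/- arXiv:2102.02893 — 5 statements merged into one kernel-verified Lean document; each statement's English description precedes it below -/
import Mathlib

section
/- Let n ≥ 2 and λ, λ₀₀ > 0. With ṽ defined by the complete-graph recursion (ṽ_n = λ₀₀/λ and ṽ_j = (λ₀₀ + (j(n−j)λ/(n−1))·ṽ_{j+1}) / (jλ/n + j(n−j)λ/(n−1)) for 1 ≤ j ≤ n−1), the value ṽ_1 satisfies ṽ_1 ≤ (λ₀₀/λ)·∑_{k=1}^{n} 1/k. -/
/-!
Downward induction on `j` proves the stronger bound
`ṽ_j ≤ (λ₀₀/λ) · n/(n-j+1) · ∑_{k=j}^n 1/k`, whose factor `n/(n-j+1)` is `1` at `j = 1`.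
The induction step closes because the tail `∑_{k=j+1}^n 1/k` is at most `(n-j)/j`.
-/

open Finset

lemma sum_Ioc_one_div_le {j : ℕ} (hj : 0 < j) (n : ℕ) :
    ∑ k ∈ Ioc j n, (1 : ℝ) / k ≤ ((n - j : ℕ) : ℝ) / j := by
  have hterm : ∀ k ∈ Ioc j n, (1 : ℝ) / k ≤ 1 / j := fun k hk =>
    one_div_le_one_div_of_le (by exact_mod_cast hj) (by exact_mod_cast (mem_Ioc.1 hk).1.le)
  simpa [Nat.card_Ioc, div_eq_mul_one_div ((n - j : ℕ) : ℝ)] using sum_le_card_nsmul _ _ _ hterm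

/-- Here `S` plays the role of `∑_{k=j+1}^n 1/k`; the bound holds with slack
`λ₀₀ (N - J - S J) / ((N - J + 1)(N - 1))`. -/
lemma recursion_step_le {N J S lam lam00 x : ℝ} (hJ : 0 < J) (hJN : J + 1 ≤ N)
    (hlam : 0 < lam) (hlam00 : 0 ≤ lam00) (hS : S * J ≤ N - J)
    (hx : x ≤ lam00 / lam * (N / (N - J)) * S) :
    (lam00 + J * (N - J) * lam / (N - 1) * x) / (J * lam / N + J * (N - J) * lam / (N - 1))
      ≤ lam00 / lam * (N / (N - J + 1)) * (1 / J + S) := by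
  have hN0 : 0 < N := by linarith
  have hN : 0 < N - 1 := by linarith
  have hNJ : 0 < N - J := by linarith
  have hD : 0 < J * lam / N + J * (N - J) * lam / (N - 1) := by positivity
  have hslack : lam00 / lam * (N / (N - J + 1)) * (1 / J + S)
        * (J * lam / N + J * (N - J) * lam / (N - 1))
      - (lam00 + J * (N - J) * lam / (N - 1) * (lam00 / lam * (N / (N - J)) * S))
      = lam00 * (N - J - S * J) / ((N - J + 1) * (N - 1)) := by
    field_simp
    ring
  have hslack_nonneg : 0 ≤ lam00 * (N - J - S * J) / ((N - J + 1) * (N - 1)) := by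
    exact div_nonneg (mul_nonneg hlam00 (by linarith)) (by positivity)
  calc (lam00 + J * (N - J) * lam / (N - 1) * x) / (J * lam / N + J * (N - J) * lam / (N - 1))
      ≤ (lam00 + J * (N - J) * lam / (N - 1) * (lam00 / lam * (N / (N - J)) * S))
          / (J * lam / N + J * (N - J) * lam / (N - 1)) := by
        gcongr
    _ ≤ lam00 / lam * (N / (N - J + 1)) * (1 / J + S) := by
        rw [div_le_iff₀ hD]
        linarith

lemma le_of_complete_graph_recursion {n : ℕ} {lam lam00 : ℝ} (hlam : 0 < lam)
    (hlam00 : 0 ≤ lam00) {v : ℕ → ℝ} (hvn : v n = lam00 / lam)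
    (hrec : ∀ j : ℕ, 1 ≤ j → j ≤ n - 1 →
      v j = (lam00 + ((j : ℝ) * ((n : ℝ) - j) * lam / ((n : ℝ) - 1)) * v (j + 1)) /
            ((j : ℝ) * lam / n + (j : ℝ) * ((n : ℝ) - j) * lam / ((n : ℝ) - 1)))
    {j : ℕ} (hj : 1 ≤ j) (hjn : j ≤ n) :
    v j ≤ lam00 / lam * (n / (n - j + 1)) * ∑ k ∈ Icc j n, (1 : ℝ) / k := by
  induction hjn using Nat.decreasingInduction with
  | self =>
    have : (n : ℝ) ≠ 0 := by positivity
    simp [hvn, this]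
  | of_succ j hjn ih =>
    have hIH := ih (by omega)
    push_cast at hIH
    rw [show (n : ℝ) - (j + 1) + 1 = n - j by ring] at hIH
    have hjR : (0 : ℝ) < j := by exact_mod_cast hj
    have hjnR : (j : ℝ) + 1 ≤ n := by exact_mod_cast hjn
    have htail := sum_Ioc_one_div_le hj n
    rw [Nat.cast_sub hjn.le, le_div_iff₀ hjR, ← Icc_add_one_left_eq_Ioc] at htail
    rw [hrec j hj (by omega), Icc_eq_cons_Ioc (by omega), sum_cons, ← Icc_add_one_left_eq_Ioc]
    exact recursion_step_le hjR hjnR hlam hlam00 htail hIH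

/-- For the complete-graph recursion, ṽ₁ ≤ (λ₀₀/λ)·∑_{k=1}^{n} 1/k. -/
theorem complete_graph_age_upper_bound
    (n : ℕ) (hn : 2 ≤ n) (lam lam00 : ℝ) (hlam : 0 < lam) (hlam00 : 0 < lam00)
    (v : ℕ → ℝ) (hvn : v n = lam00 / lam)
    (hrec : ∀ j : ℕ, 1 ≤ j → j ≤ n - 1 →
      v j = (lam00 + ((j : ℝ) * ((n : ℝ) - j) * lam / ((n : ℝ) - 1)) * v (j + 1)) /
            ((j : ℝ) * lam / n + (j : ℝ) * ((n : ℝ) - j) * lam / ((n : ℝ) - 1))) :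
    v 1 ≤ (lam00 / lam) * ∑ k ∈ Finset.Icc 1 n, (1 : ℝ) / k := by
  have hn0 : (n : ℝ) ≠ 0 := by positivity
  simpa [hn0] using le_of_complete_graph_recursion hlam hlam00.le hvn hrec le_rfl (by omega)
end

section
/- Let n ≥ 2 and λ, λ₀₀ > 0. With ṽ defined by the complete-graph recursion (ṽ_n = λ₀₀/λ and ṽ_j = (λ₀₀ + (j(n−j)λ/(n−1))·ṽ_{j+1}) / (jλ/n + j(n−j)λ/(n−1)) for 1 ≤ j ≤ n−1), the value ṽ_1 satisfies ṽ_1 ≥ (λ₀₀/λ)·[ ((n−1)/n)·∑_{k=1}^{n−1} 1/k + 1/n ]. -/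
/-!
Write `H j = ∑_{k=j}^{n-1} 1/k` and `G j = (1 + (n-1) H j) / (n - j + 1)`, so that
`G n = 1` and `G 1` is the bracket in the claimed bound. A direct computation shows that
`(λ₀₀/λ) G` satisfies the recursion up to the factor `1 - 1/(n (n - j + 1)) ≤ 1` on the
left-hand side, i.e. it is a subsolution. Since each step `ṽ_{j+1} ↦ ṽ_j` of the recursion
is monotone, downward induction from `j = n`, where both sides equal `λ₀₀/λ`, gives
`(λ₀₀/λ) G j ≤ ṽ_j` for all `j`.
-/

open Finset

theorem le_of_backward_recursion {α : Type*} [Preorder α] {m n : ℕ} {u v : ℕ → α}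
    (F : ℕ → α → α) (hF : ∀ j, m ≤ j → j < n → Monotone (F j))
    (hv : ∀ j, m ≤ j → j < n → v j = F j (v (j + 1)))
    (hu : ∀ j, m ≤ j → j < n → u j ≤ F j (u (j + 1)))
    (hn : u n ≤ v n) {j : ℕ} (hmj : m ≤ j) (hjn : j ≤ n) : u j ≤ v j := by
  induction hjn using Nat.decreasingInduction with
  | self => exact hn
  | of_succ k hkn ih =>
    calc u k ≤ F k (u (k + 1)) := hu k hmj hkn
      _ ≤ F k (v (k + 1)) := hF k hmj hkn (ih (hmj.trans k.le_succ))
      _ = v k := (hv k hmj hkn).symm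

noncomputable def harmonicTail (n j : ℕ) : ℝ := ∑ k ∈ Icc j (n - 1), (1 : ℝ) / k

lemma harmonicTail_nonneg (n j : ℕ) : 0 ≤ harmonicTail n j :=
  sum_nonneg fun _ _ => by positivity

lemma harmonicTail_eq_inv_add {n j : ℕ} (hj : j ≤ n - 1) :
    harmonicTail n j = 1 / j + harmonicTail n (j + 1) := by
  rw [harmonicTail, Icc_eq_cons_Ioc hj, sum_cons, harmonicTail, Icc_add_one_left_eq_Ioc]

lemma harmonicTail_self (n : ℕ) : harmonicTail n n = 0 := by
  rcases n with _ | n <;> simp [harmonicTail]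

noncomputable def ageBound (n j : ℕ) : ℝ := (1 + (n - 1) * harmonicTail n j) / (n - j + 1)

lemma ageBound_self (n : ℕ) : ageBound n n = 1 := by
  simp [ageBound, harmonicTail_self]

lemma ageBound_mul_rate_eq {n j : ℕ} (hj : 1 ≤ j) (hjn : j < n) :
    ageBound n j * (j / n + j * (n - j) / (n - 1)) =
      (1 - 1 / (n * (n - j + 1))) * (1 + j * (n - j) / (n - 1) * ageBound n (j + 1)) := by
  have hJ : (1 : ℝ) ≤ j := by exact_mod_cast hj
  have hJN : (j : ℝ) + 1 ≤ n := by exact_mod_cast hjn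
  have hN1 : (n : ℝ) - 1 ≠ 0 := by linarith
  have hNJ : (n : ℝ) - j ≠ 0 := by linarith
  have hNJ1 : (n : ℝ) - j + 1 ≠ 0 := by linarith
  have hN : (n : ℝ) ≠ 0 := by linarith
  have hJ0 : (j : ℝ) ≠ 0 := by linarith
  have hcast : (n : ℝ) - (j + 1 : ℕ) + 1 = n - j := by push_cast; ring
  rw [ageBound, ageBound, hcast, harmonicTail_eq_inv_add (by omega)]
  field_simp
  ring

lemma ageBound_nonneg {n j : ℕ} (hn : 1 ≤ n) (hjn : j ≤ n) : 0 ≤ ageBound n j := by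
  have hN : (1 : ℝ) ≤ n := by exact_mod_cast hn
  have hJN : (j : ℝ) ≤ n := by exact_mod_cast hjn
  have := harmonicTail_nonneg n j
  exact div_nonneg (by nlinarith) (by linarith)

lemma ageBound_mul_rate_le {n j : ℕ} (hj : 1 ≤ j) (hjn : j < n) :
    ageBound n j * (j / n + j * (n - j) / (n - 1)) ≤
      1 + j * (n - j) / (n - 1) * ageBound n (j + 1) := by
  have hJN : (j : ℝ) + 1 ≤ n := by exact_mod_cast hjn
  have hcoef : 0 ≤ (j : ℝ) * (n - j) / (n - 1) :=
    div_nonneg (mul_nonneg j.cast_nonneg (by linarith)) (by linarith)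
  rw [ageBound_mul_rate_eq hj hjn]
  refine mul_le_of_le_one_left ?_ (sub_le_self _ ?_)
  · have := ageBound_nonneg (by omega) hjn
    positivity
  · have : (0 : ℝ) ≤ n - j + 1 := by linarith
    positivity

noncomputable def gossipStep (n : ℕ) (lam lam00 : ℝ) (j : ℕ) (x : ℝ) : ℝ :=
  (lam00 + (j * (n - j) * lam / (n - 1)) * x) / (j * lam / n + j * (n - j) * lam / (n - 1))

lemma gossipStep_monotone {n j : ℕ} (hjn : j < n) {lam : ℝ} (hlam : 0 < lam) (lam00 : ℝ) :
    Monotone (gossipStep n lam lam00 j) := by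
  intro x y hxy
  have hJN : (j : ℝ) + 1 ≤ n := by exact_mod_cast hjn
  have hNJ : (0 : ℝ) ≤ n - j := by linarith
  have hN1 : (0 : ℝ) ≤ n - 1 := by linarith
  unfold gossipStep
  gcongr

lemma div_mul_ageBound_le_gossipStep {n j : ℕ} (hj : 1 ≤ j) (hjn : j < n) {lam lam00 : ℝ}
    (hlam : 0 < lam) (hlam00 : 0 ≤ lam00) :
    lam00 / lam * ageBound n j ≤ gossipStep n lam lam00 j (lam00 / lam * ageBound n (j + 1)) := by
  have hJN : (j : ℝ) + 1 ≤ n := by exact_mod_cast hjn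
  have hJ : (0 : ℝ) < j := by exact_mod_cast hj
  have hN1 : (0 : ℝ) < n - 1 := by linarith
  have hNJ : (0 : ℝ) ≤ n - j := by linarith
  have hN : (0 : ℝ) < n := by linarith
  rw [gossipStep, le_div_iff₀ (add_pos_of_pos_of_nonneg (by positivity) (by positivity))]
  convert mul_le_mul_of_nonneg_left (ageBound_mul_rate_le hj hjn) hlam00 using 1 <;>
    field_simp

/-- For the complete-graph recursion,
ṽ₁ ≥ (λ₀₀/λ)·[((n−1)/n)·∑_{k=1}^{n−1} 1/k + 1/n]. -/
theorem complete_graph_age_lower_bound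
    (n : ℕ) (hn : 2 ≤ n) (lam lam00 : ℝ) (hlam : 0 < lam) (hlam00 : 0 < lam00)
    (v : ℕ → ℝ) (hvn : v n = lam00 / lam)
    (hrec : ∀ j : ℕ, 1 ≤ j → j ≤ n - 1 →
      v j = (lam00 + ((j : ℝ) * ((n : ℝ) - j) * lam / ((n : ℝ) - 1)) * v (j + 1)) /
            ((j : ℝ) * lam / n + (j : ℝ) * ((n : ℝ) - j) * lam / ((n : ℝ) - 1))) :
    v 1 ≥ (lam00 / lam) *
      (((n : ℝ) - 1) / n * ∑ k ∈ Finset.Icc 1 (n - 1), (1 : ℝ) / k + 1 / n) := by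
  have hv1 : lam00 / lam * ageBound n 1 ≤ v 1 :=
    le_of_backward_recursion (gossipStep n lam lam00)
      (fun _ _ hjn => gossipStep_monotone hjn hlam lam00)
      (fun j hj _ => hrec j hj (by omega))
      (fun _ hj hjn => div_mul_ageBound_le_gossipStep hj hjn hlam hlam00.le)
      (by rw [ageBound_self, mul_one, hvn]) le_rfl (by omega)
  calc _ = lam00 / lam * ageBound n 1 := by
        rw [ageBound, harmonicTail, Nat.cast_one, sub_add_cancel]; field_simp; ring
    _ ≤ v 1 := hv1
end

section
/- Let n ≥ 2 and λ, λ₀₀ > 0. With ṽ defined by the complete-graph recursion and v̂_k := ṽ_{n−k+1} for k = 1,…,n, one has v̂_k ≤ n·λ₀₀/((n−k)·λ) for every k with 1 ≤ k ≤ n−1. -/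
/-- With v̂_k := ṽ_{n−k+1}, one has v̂_k ≤ n·λ₀₀/((n−k)·λ) for 1 ≤ k ≤ n−1. -/
theorem complete_graph_vhat_bound
    (n : ℕ) (hn : 2 ≤ n) (lam lam00 : ℝ) (hlam : 0 < lam) (hlam00 : 0 < lam00)
    (v : ℕ → ℝ) (hvn : v n = lam00 / lam)
    (hrec : ∀ j : ℕ, 1 ≤ j → j ≤ n - 1 →
      v j = (lam00 + ((j : ℝ) * ((n : ℝ) - j) * lam / ((n : ℝ) - 1)) * v (j + 1)) /
            ((j : ℝ) * lam / n + (j : ℝ) * ((n : ℝ) - j) * lam / ((n : ℝ) - 1))) :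
    ∀ k : ℕ, 1 ≤ k → k ≤ n - 1 →
      v (n - k + 1) ≤ (n : ℝ) * lam00 / (((n : ℝ) - k) * lam) := by
  have hn2 : (2 : ℝ) ≤ (n : ℝ) := by exact_mod_cast hn
  intro k hk1
  induction k, hk1 using Nat.le_induction with
  | base =>
    intro _
    have hidx : n - 1 + 1 = n := by omega
    rw [hidx, hvn]
    push_cast
    rw [div_le_div_iff₀ hlam (by nlinarith : (0:ℝ) < ((n:ℝ) - 1) * lam)]
    nlinarith
  | succ k hk ih =>
    intro hk1
    have hkn : k ≤ n := by omega
    have hK : (k : ℝ) + 2 ≤ (n : ℝ) := by exact_mod_cast (by omega : k + 2 ≤ n)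
    have hK1 : (1 : ℝ) ≤ (k : ℝ) := by exact_mod_cast hk
    have ihb := ih (by omega)
    have hj1 : 1 ≤ n - k := by omega
    have hj2 : n - k ≤ n - 1 := by omega
    have hc : ((n - k : ℕ) : ℝ) = (n : ℝ) - k := by
      rw [Nat.cast_sub hkn]
    have hidx : n - (k + 1) + 1 = n - k := by omega
    rw [hidx]
    have hrec' := hrec (n - k) hj1 hj2
    rw [hc] at hrec'
    rw [hrec']
    push_cast
    -- abbreviations
    have hJ : (2 : ℝ) ≤ (n : ℝ) - k := by linarith
    have hD : (0 : ℝ) < ((n:ℝ) - k) * lam / n + ((n:ℝ) - k) * ((n:ℝ) - ((n:ℝ) - k)) * lam / ((n:ℝ) - 1) := by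
      have h1 : (0:ℝ) < ((n:ℝ) - k) * lam / n := by positivity
      have h2 : (0:ℝ) ≤ ((n:ℝ) - k) * ((n:ℝ) - ((n:ℝ) - k)) * lam / ((n:ℝ) - 1) := by
        apply div_nonneg
        · have : (n:ℝ) - ((n:ℝ) - k) = k := by ring
          rw [this]; positivity
        · linarith
      linarith
    have hT : (0 : ℝ) < ((n:ℝ) - ((k:ℝ) + 1)) * lam := by nlinarith
    have hJpos : (0:ℝ) < ((n:ℝ) - k) * lam := by nlinarith
    -- from IH: v (n - k + 1) * (((n:ℝ) - k) * lam) ≤ n * lam00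
    have hw : v (n - k + 1) * (((n:ℝ) - k) * lam) ≤ (n : ℝ) * lam00 := by
      calc v (n - k + 1) * (((n:ℝ) - k) * lam)
          ≤ ((n : ℝ) * lam00 / (((n:ℝ) - k) * lam)) * (((n:ℝ) - k) * lam) := by
            exact mul_le_mul_of_nonneg_right ihb (le_of_lt hJpos)
        _ = (n : ℝ) * lam00 := by field_simp
    have key : (lam00 + ((n:ℝ) - k) * ((n:ℝ) - ((n:ℝ) - k)) * lam / ((n:ℝ) - 1) * v (n - k + 1)) /
        (((n:ℝ) - k) * lam / n + ((n:ℝ) - k) * ((n:ℝ) - ((n:ℝ) - k)) * lam / ((n:ℝ) - 1))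
        ≤ (n : ℝ) * lam00 / (((n:ℝ) - k) * lam) := by
      rw [div_le_div_iff₀ hD hJpos]
      have hA : (0:ℝ) ≤ ((n:ℝ) - k) * ((n:ℝ) - ((n:ℝ) - k)) * lam / ((n:ℝ) - 1) := by
        apply div_nonneg
        · have h2 : (n:ℝ) - ((n:ℝ) - k) = k := by ring
          rw [h2]; positivity
        · linarith
      have hmul := mul_le_mul_of_nonneg_left hw hA
      have hn0 : (n : ℝ) ≠ 0 := by positivity
      have hn1 : (n : ℝ) - 1 ≠ 0 := by nlinarith
      have hexp : (n : ℝ) * lam00 * (((n:ℝ) - k) * lam / n +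
          ((n:ℝ) - k) * ((n:ℝ) - ((n:ℝ) - k)) * lam / ((n:ℝ) - 1))
          = lam00 * (((n:ℝ) - k) * lam) +
            (((n:ℝ) - k) * ((n:ℝ) - ((n:ℝ) - k)) * lam / ((n:ℝ) - 1)) * ((n:ℝ) * lam00) := by
        field_simp
      rw [hexp]
      nlinarith [hmul]
    have hle : ((n:ℝ) - ((k:ℝ) + 1)) * lam ≤ ((n:ℝ) - (k:ℝ)) * lam :=
      mul_le_mul_of_nonneg_right (by linarith) hlam.le
    have hnpos : (0:ℝ) < (n:ℝ) := by linarith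
    have hnum : (0:ℝ) ≤ (n : ℝ) * lam00 := (mul_pos hnpos hlam00).le
    have mono : (n : ℝ) * lam00 / (((n:ℝ) - (k:ℝ)) * lam)
        ≤ (n : ℝ) * lam00 / (((n:ℝ) - ((k:ℝ) + 1)) * lam) :=
      div_le_div_of_nonneg_left hnum hT hle
    exact le_trans key mono
end

section
/- Let n ≥ 2 be an integer, k an integer with 1 ≤ k ≤ n−1, λ, λ₀₀ > 0, and suppose v̂_k ≥ 0 and v̂_{k+1} satisfy the equality v̂_{k+1} = ( λ₀₀/((n−k)·λ) + (k/(n−1))·v̂_k ) / ( 1/n + k/(n−1) ). Then, writing ŷ_k = k·v̂_k/(n−1) and ŷ_{k+1} = (k+1)·v̂_{k+1}/(n−1), one has ŷ_{k+1} ≥ λ₀₀/((n−k)·λ) + ŷ_k. -/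
/-- the exact recursion for v̂ implies the telescoping lower bound for
ŷ_k = k·v̂_k/(n−1). -/
theorem complete_graph_vhat_to_yhat_step
    (n k : ℕ) (hn : 2 ≤ n) (hk1 : 1 ≤ k) (hk : k ≤ n - 1)
    (lam lam00 : ℝ) (hlam : 0 < lam) (hlam00 : 0 < lam00)
    (vk vk1 : ℝ) (hvk : 0 ≤ vk)
    (hv : vk1 = (lam00 / (((n : ℝ) - k) * lam) + ((k : ℝ) / ((n : ℝ) - 1)) * vk) /
          (1 / (n : ℝ) + (k : ℝ) / ((n : ℝ) - 1))) :
    ((k : ℝ) + 1) * vk1 / ((n : ℝ) - 1) ≥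
      lam00 / (((n : ℝ) - k) * lam) + (k : ℝ) * vk / ((n : ℝ) - 1) := by
  have hkn : k + 1 ≤ n := by omega
  have hkr : (k : ℝ) + 1 ≤ (n : ℝ) := by exact_mod_cast hkn
  have hnr : (2 : ℝ) ≤ (n : ℝ) := by exact_mod_cast hn
  have hkr1 : (1 : ℝ) ≤ (k : ℝ) := by exact_mod_cast hk1
  have hnk : (0 : ℝ) < (n : ℝ) - k := by linarith
  have hn1 : (0 : ℝ) < (n : ℝ) - 1 := by linarith
  have hn0 : (0 : ℝ) < (n : ℝ) := by linarith
  have hA : 0 < lam00 / (((n : ℝ) - k) * lam) :=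
    div_pos hlam00 (mul_pos hnk hlam)
  set A := lam00 / (((n : ℝ) - k) * lam) with hAdef
  have hD : (0 : ℝ) < 1 / (n : ℝ) + (k : ℝ) / ((n : ℝ) - 1) := by positivity
  rw [ge_iff_le, hv, le_div_iff₀ hn1, ← mul_div_assoc, le_div_iff₀ hD]
  have hk0 : (0 : ℝ) ≤ (k : ℝ) / ((n : ℝ) - 1) * vk := by positivity
  have key : ((n : ℝ) - 1) * (1 / (n : ℝ) + (k : ℝ) / ((n : ℝ) - 1)) ≤ (k : ℝ) + 1 := by
    rw [mul_add, mul_div_cancel₀ _ (by linarith : ((n : ℝ) - 1) ≠ 0)]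
    have : ((n : ℝ) - 1) * (1 / (n : ℝ)) < 1 := by
      rw [mul_one_div, div_lt_one hn0]; linarith
    linarith
  calc (A + (k : ℝ) * vk / ((n : ℝ) - 1)) * ((n : ℝ) - 1) *
        (1 / (n : ℝ) + (k : ℝ) / ((n : ℝ) - 1))
      ≤ (A + (k : ℝ) * vk / ((n : ℝ) - 1)) * ((k : ℝ) + 1) := by
        rw [mul_assoc]
        refine mul_le_mul_of_nonneg_left key ?_
        have : (0:ℝ) ≤ (k : ℝ) * vk / ((n : ℝ) - 1) := by positivity
        linarith
    _ = ((k : ℝ) + 1) * (A + (k : ℝ) / ((n : ℝ) - 1) * vk) := by ring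
end

section
/- For each integer n ≥ 2 and λ, λ₀₀ > 0, let ṽ_1(n) be defined by the complete-graph recursion (ṽ_n = λ₀₀/λ and ṽ_j = (λ₀₀ + (j(n−j)λ/(n−1))·ṽ_{j+1}) / (jλ/n + j(n−j)λ/(n−1)) for 1 ≤ j ≤ n−1). Then ṽ_1(n)/log n → λ₀₀/λ as n → ∞; in particular the average version age of a node in the symmetric complete gossip network grows logarithmically in the network size n. -/
/-!
The map ṽ_{j+1} ↦ ṽ_j is monotone, so by downward induction from j = n any super- or
subsolution of the recursion bounds ṽ from above or below. With H_j = ∑_{j ≤ i < n} 1/i,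
(λ₀₀/λ)(H_j + 1) is a supersolution and (λ₀₀/λ)·(n-1)/(n-j+1)·H_j a subsolution: the weight
(n-1)/(n-j+1) turns the coupling term of the recursion into exactly λ₀₀ j H_{j+1}. At j = 1
this sandwiches ṽ_1 between (λ₀₀/λ)((n-1)/n) H_1 and (λ₀₀/λ)(H_1 + 1), while
log n ≤ H_1 ≤ 1 + log n.
-/

open Finset Filter Real Topology

theorem le_of_subsolution_of_supersolution {α : Type*} [Preorder α] {f : ℕ → α → α}
    {m n : ℕ} {w u : ℕ → α} (hf : ∀ j, m ≤ j → j < n → Monotone (f j))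
    (hw : ∀ j, m ≤ j → j < n → w j ≤ f j (w (j + 1)))
    (hu : ∀ j, m ≤ j → j < n → f j (u (j + 1)) ≤ u j) (hn : w n ≤ u n)
    {j : ℕ} (hmj : m ≤ j) (hjn : j ≤ n) : w j ≤ u j := by
  refine Nat.decreasingInduction' (P := fun k => w k ≤ u k) (fun k hkn hjk ih => ?_) hjn hn
  have hmk := hmj.trans hjk
  exact (hw k hmk hkn).trans ((hf k hmk hkn ih).trans (hu k hmk hkn))

noncomputable def tailHarmonic (n j : ℕ) : ℝ := ∑ i ∈ Ico j n, (i : ℝ)⁻¹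

theorem tailHarmonic_self (n : ℕ) : tailHarmonic n n = 0 := by simp [tailHarmonic]

theorem tailHarmonic_eq_inv_add {n j : ℕ} (hjn : j < n) :
    tailHarmonic n j = (j : ℝ)⁻¹ + tailHarmonic n (j + 1) :=
  sum_eq_sum_Ico_succ_bot hjn _

theorem tailHarmonic_nonneg (n j : ℕ) : 0 ≤ tailHarmonic n j :=
  sum_nonneg fun _ _ => by positivity

theorem tailHarmonic_succ_one (n : ℕ) : tailHarmonic (n + 1) 1 = harmonic n := by
  rw [tailHarmonic, harmonic_eq_sum_Icc, ← Ico_add_one_right_eq_Icc]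
  push_cast
  rfl

theorem log_le_tailHarmonic_one (n : ℕ) : log n ≤ tailHarmonic n 1 := by
  rcases n with _ | m
  · simp [tailHarmonic]
  · rw [tailHarmonic_succ_one]
    exact_mod_cast log_add_one_le_harmonic m

theorem tailHarmonic_one_le_one_add_log (n : ℕ) : tailHarmonic n 1 ≤ 1 + log n := by
  rcases n with _ | _ | m
  · simp [tailHarmonic]
  · simp [tailHarmonic]
  · rw [tailHarmonic_succ_one]
    refine (harmonic_le_one_add_log _).trans ?_
    gcongr
    omega

noncomputable def ageStep (lam lam00 : ℝ) (n j : ℕ) (x : ℝ) : ℝ :=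
  (lam00 + ((j : ℝ) * ((n : ℝ) - j) * lam / ((n : ℝ) - 1)) * x) /
    ((j : ℝ) * lam / n + (j : ℝ) * ((n : ℝ) - j) * lam / ((n : ℝ) - 1))

section AgeStep

variable {lam lam00 : ℝ} {n j : ℕ}

theorem ageStep_monotone (hlam : 0 ≤ lam) (hjn : j ≤ n) : Monotone (ageStep lam lam00 n j) := by
  intro x y hxy
  have hj : (j : ℝ) ≤ n := by exact_mod_cast hjn
  unfold ageStep
  rcases Nat.eq_zero_or_pos n with rfl | hn
  · simp_all
  have hn1 : (1 : ℝ) ≤ n := by exact_mod_cast hn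
  gcongr

theorem ageStep_denom_pos (hlam : 0 < lam) (hj : 1 ≤ j) (hjn : j < n) :
    0 < (j : ℝ) * lam / n + (j : ℝ) * ((n : ℝ) - j) * lam / ((n : ℝ) - 1) := by
  have hj' : (1 : ℝ) ≤ j := by exact_mod_cast hj
  have hjn' : (j : ℝ) + 1 ≤ n := by exact_mod_cast hjn
  have : 0 < (n : ℝ) - j := by linarith
  have : 0 < (n : ℝ) - 1 := by linarith
  positivity

theorem ageStep_le_of_tailHarmonic (hlam : 0 < lam) (hlam00 : 0 ≤ lam00) (hj : 1 ≤ j)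
    (hjn : j < n) :
    ageStep lam lam00 n j (lam00 / lam * (tailHarmonic n (j + 1) + 1)) ≤
      lam00 / lam * (tailHarmonic n j + 1) := by
  have hj' : (1 : ℝ) ≤ j := by exact_mod_cast hj
  have hjn' : (j : ℝ) + 1 ≤ n := by exact_mod_cast hjn
  have hs := tailHarmonic_nonneg n (j + 1)
  rw [tailHarmonic_eq_inv_add hjn, ageStep, div_le_iff₀ (ageStep_denom_pos hlam hj hjn)]
  set s := tailHarmonic n (j + 1)
  have hn0 : (n : ℝ) ≠ 0 := by linarith
  have hn1 : (n : ℝ) - 1 ≠ 0 := by linarith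
  have hgap : lam00 / lam * ((j : ℝ)⁻¹ + s + 1) *
        ((j : ℝ) * lam / n + (j : ℝ) * ((n : ℝ) - j) * lam / ((n : ℝ) - 1)) -
      (lam00 + (j : ℝ) * ((n : ℝ) - j) * lam / ((n : ℝ) - 1) * (lam00 / lam * (s + 1))) =
        lam00 * ((((n : ℝ) - j) / ((n : ℝ) - 1) - ((n : ℝ) - j) / n) + (1 + j * s) / n) := by
    field_simp
    ring
  have hfrac : ((n : ℝ) - j) / n ≤ ((n : ℝ) - j) / ((n : ℝ) - 1) := by
    gcongr <;> linarith
  have := mul_nonneg hlam00 (add_nonneg (sub_nonneg.2 hfrac) (by positivity : 0 ≤ (1 + j * s) / n))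
  linarith

theorem le_ageStep_of_tailHarmonic (hlam : 0 < lam) (hlam00 : 0 ≤ lam00) (hj : 1 ≤ j)
    (hjn : j < n) :
    lam00 / lam * (((n : ℝ) - 1) / ((n : ℝ) - j + 1)) * tailHarmonic n j ≤
      ageStep lam lam00 n j
        (lam00 / lam * (((n : ℝ) - 1) / ((n : ℝ) - ↑(j + 1) + 1)) * tailHarmonic n (j + 1)) := by
  have hj' : (1 : ℝ) ≤ j := by exact_mod_cast hj
  have hjn' : (j : ℝ) + 1 ≤ n := by exact_mod_cast hjn
  have hs := tailHarmonic_nonneg n (j + 1)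
  rw [tailHarmonic_eq_inv_add hjn, ageStep, le_div_iff₀ (ageStep_denom_pos hlam hj hjn)]
  set s := tailHarmonic n (j + 1)
  have hn1 : (n : ℝ) - 1 ≠ 0 := by linarith
  have hcoupling : (j : ℝ) * ((n : ℝ) - j) * lam / ((n : ℝ) - 1) *
      (lam00 / lam * (((n : ℝ) - 1) / ((n : ℝ) - ↑(j + 1) + 1)) * s) = lam00 * j * s := by
    have hnj : (n : ℝ) - j ≠ 0 := by linarith
    rw [show (n : ℝ) - ↑(j + 1) + 1 = n - j by push_cast; ring]
    field_simp
  have hden : (j : ℝ) * lam / n + (j : ℝ) * ((n : ℝ) - j) * lam / ((n : ℝ) - 1) ≤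
      j * lam * ((n : ℝ) - j + 1) / ((n : ℝ) - 1) := by
    have : (j : ℝ) * lam / n ≤ j * lam / ((n : ℝ) - 1) := by gcongr <;> linarith
    have : (j : ℝ) * lam * ((n : ℝ) - j + 1) / ((n : ℝ) - 1) =
        j * lam / ((n : ℝ) - 1) + (j : ℝ) * ((n : ℝ) - j) * lam / ((n : ℝ) - 1) := by ring
    linarith
  have hweight : 0 ≤ lam00 / lam * (((n : ℝ) - 1) / ((n : ℝ) - j + 1)) * ((j : ℝ)⁻¹ + s) := by
    have : 0 ≤ ((n : ℝ) - 1) / ((n : ℝ) - j + 1) := div_nonneg (by linarith) (by linarith)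
    positivity
  have hnj1 : (n : ℝ) - j + 1 ≠ 0 := by linarith
  calc _ ≤ lam00 / lam * (((n : ℝ) - 1) / ((n : ℝ) - j + 1)) * ((j : ℝ)⁻¹ + s) *
        (j * lam * ((n : ℝ) - j + 1) / ((n : ℝ) - 1)) := mul_le_mul_of_nonneg_left hden hweight
    _ = lam00 + lam00 * j * s := by field_simp
    _ = _ := by rw [hcoupling]

variable {v : ℕ → ℝ}

theorem ageStep_solution_one_le (hlam : 0 < lam) (hlam00 : 0 ≤ lam00) (hn : 1 ≤ n)
    (hvn : v n = lam00 / lam)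
    (hrec : ∀ j, 1 ≤ j → j < n → v j = ageStep lam lam00 n j (v (j + 1))) :
    v 1 ≤ lam00 / lam * (tailHarmonic n 1 + 1) :=
  le_of_subsolution_of_supersolution (f := ageStep lam lam00 n)
    (u := fun j => lam00 / lam * (tailHarmonic n j + 1))
    (fun _ _ hjn => ageStep_monotone hlam.le hjn.le) (fun j hj hjn => (hrec j hj hjn).le)
    (fun _ hj hjn => ageStep_le_of_tailHarmonic hlam hlam00 hj hjn)
    (by simp [hvn, tailHarmonic_self]) le_rfl hn

theorem le_ageStep_solution_one (hlam : 0 < lam) (hlam00 : 0 ≤ lam00) (hn : 1 ≤ n)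
    (hvn : v n = lam00 / lam)
    (hrec : ∀ j, 1 ≤ j → j < n → v j = ageStep lam lam00 n j (v (j + 1))) :
    lam00 / lam * (((n : ℝ) - 1) / n) * tailHarmonic n 1 ≤ v 1 := by
  have := le_of_subsolution_of_supersolution (f := ageStep lam lam00 n)
    (w := fun j => lam00 / lam * (((n : ℝ) - 1) / ((n : ℝ) - j + 1)) * tailHarmonic n j)
    (fun _ _ hjn => ageStep_monotone hlam.le hjn.le)
    (fun _ hj hjn => le_ageStep_of_tailHarmonic hlam hlam00 hj hjn)
    (fun j hj hjn => (hrec j hj hjn).ge)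
    (by simpa [tailHarmonic_self, hvn] using div_nonneg hlam00 hlam.le) le_rfl hn
  simpa using this

end AgeStep

theorem tendsto_div_log_of_le_of_le {f a : ℕ → ℝ} {c K : ℝ} (ha : Tendsto a atTop (𝓝 c))
    (hlow : ∀ᶠ n in atTop, a n * log n ≤ f n) (hup : ∀ᶠ n in atTop, f n ≤ c * log n + K) :
    Tendsto (fun n => f n / log n) atTop (𝓝 c) := by
  have hlog := tendsto_log_atTop.comp tendsto_natCast_atTop_atTop
  have hpos : ∀ᶠ n : ℕ in atTop, 0 < log n := hlog.eventually_gt_atTop 0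
  have hupper : Tendsto (fun n : ℕ => c + K * (log n)⁻¹) atTop (𝓝 c) := by
    simpa using tendsto_const_nhds.add (tendsto_const_nhds.mul hlog.inv_tendsto_atTop)
  refine tendsto_of_tendsto_of_tendsto_of_le_of_le' ha hupper ?_ ?_
  · filter_upwards [hlow, hpos] with n h hp
    rwa [le_div_iff₀ hp]
  · filter_upwards [hup, hpos] with n h hp
    rwa [div_le_iff₀ hp, add_mul, mul_assoc, inv_mul_cancel₀ hp.ne', mul_one]

/-- ṽ₁(n)/log n → λ₀₀/λ as n → ∞: the average version age of a node in
the symmetric complete gossip network grows logarithmically in the network size n. -/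
theorem complete_graph_age_log_asymptotics
    (lam lam00 : ℝ) (hlam : 0 < lam) (hlam00 : 0 < lam00)
    (v : ℕ → ℕ → ℝ)
    (hvn : ∀ n : ℕ, 2 ≤ n → v n n = lam00 / lam)
    (hrec : ∀ n : ℕ, 2 ≤ n → ∀ j : ℕ, 1 ≤ j → j ≤ n - 1 →
      v n j = (lam00 + ((j : ℝ) * ((n : ℝ) - j) * lam / ((n : ℝ) - 1)) * v n (j + 1)) /
              ((j : ℝ) * lam / n + (j : ℝ) * ((n : ℝ) - j) * lam / ((n : ℝ) - 1))) :
    Filter.Tendsto (fun n : ℕ => v n 1 / Real.log n) Filter.atTop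
      (nhds (lam00 / lam)) := by
  set c := lam00 / lam
  have hrec' (n : ℕ) (hn : 2 ≤ n) (j : ℕ) (hj : 1 ≤ j) (hjn : j < n) :
      v n j = ageStep lam lam00 n j (v n (j + 1)) :=
    hrec n hn j hj (Nat.le_sub_one_of_lt hjn)
  have hfrac : Tendsto (fun n : ℕ => ((n : ℝ) - 1) / n) atTop (𝓝 1) := by
    simpa [sub_eq_neg_add] using tendsto_add_mul_div_add_mul_atTop_nhds (-1 : ℝ) 0 1 one_ne_zero
  refine tendsto_div_log_of_le_of_le (K := 2 * c) (by simpa using hfrac.const_mul c) ?_ ?_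
  · filter_upwards [eventually_ge_atTop 2] with n hn
    have hn' : (1 : ℝ) ≤ n := by exact_mod_cast hn.trans' one_le_two
    calc c * (((n : ℝ) - 1) / n) * log n
        ≤ c * (((n : ℝ) - 1) / n) * tailHarmonic n 1 := by
          have : 0 ≤ ((n : ℝ) - 1) / n := div_nonneg (by linarith) (by linarith)
          gcongr
          exact log_le_tailHarmonic_one n
      _ ≤ v n 1 := le_ageStep_solution_one hlam hlam00.le (by omega) (hvn n hn) (hrec' n hn)
  · filter_upwards [eventually_ge_atTop 2] with n hn
    calc v n 1 ≤ c * (tailHarmonic n 1 + 1) :=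
          ageStep_solution_one_le hlam hlam00.le (by omega) (hvn n hn) (hrec' n hn)
      _ ≤ c * (1 + log n + 1) := by gcongr; exact tailHarmonic_one_le_one_add_log n
      _ = c * log n + 2 * c := by ring
end
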